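/- Let B ⊆ P be a coalgebra-Galois C-extension with translation map τ(c) = c^[1] ⊗_B c^[2]. Then for all c ∈ C and p ∈ P: (i) c^[1] (c^[2])₍₀₎ ⊗ (c^[2])₍₁₎ = 1 ⊗ c; (ii) c^[1] c^[2] = ε(c) 1; (iii) p₍₀₎ (p₍₁₎)^[1] ⊗_B (p₍₁₎)^[2] = 1 ⊗_B p; (iv) c^[1] ⊗_B (c^[2])₍₀₎ ⊗ (c^[2])₍₁₎ = (c₍₁₎)^[1] ⊗_B (c₍₁₎)^[2] ⊗ c₍₂₎; (v) c^[1] ⊗_B 1 ⊗_B c^[2] = (c₍₁₎)^[1] ⊗_B (c₍₁₎)^[2] (c₍₂₎)^[1] ⊗_B (c₍₂₎)^[2]; (vi) for any algebra map F : P → P which is also a right C-comodule map, (F ⊗_B F) ∘ τ = τ; (vii) if the extension is e-coaugmented then e^[1] ⊗_B e^[2] = 1 ⊗_B 1. -/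
import Mathlib


/-!
STATEMENT 4 (Translation Map Lemma).  For a coalgebra-Galois C-extension
B ⊆ P with translation map τ(c) = c^[1] ⊗_B c^[2], properties (i)-(vii) hold.
Here P ⊗_B P is realised as the quotient of P ⊗ P by the submodule `galRel δ`
of B-relations, and the translation map is represented by any linear lift
t : C → P ⊗ P with ~can(t c) = 1 ⊗ c; equalities in P ⊗_B P (and in
P ⊗_B P ⊗ C, P ⊗_B P ⊗_B P) are expressed as membership of differences of
representatives in the corresponding relation submodules.
-/

open TensorProduct LinearMap

noncomputable section

namespace CGal

variable {k : Type*} [Field k]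
variable {P C : Type*} [Ring P] [Algebra k P]
  [AddCommGroup C] [Module k C] [Coalgebra k C]

/-- The coaction invariants `P^{coC}`. -/
def coinv (δ : P →ₗ[k] P ⊗[k] C) : Set P :=
  {b : P | ∀ p : P, δ (b * p) = b • δ p}

/-- `δ` is a (counital, coassociative) right `C`-coaction on `P`. -/
def IsCoaction (δ : P →ₗ[k] P ⊗[k] C) : Prop :=
  (∀ p : P, (TensorProduct.rid k P) ((lTensor P (Coalgebra.counit : C →ₗ[k] k)) (δ p)) = p) ∧
  (∀ p : P, (rTensor C δ) (δ p)
      = (TensorProduct.assoc k P C C).symm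
          ((lTensor P (Coalgebra.comul : C →ₗ[k] C ⊗[k] C)) (δ p)))

/-- The kernel of `P ⊗ P → P ⊗_B P` for `B = P^{coC}`. -/
def galRel (δ : P →ₗ[k] P ⊗[k] C) : Submodule k (P ⊗[k] P) :=
  Submodule.span k
    {x | ∃ p b p', b ∈ coinv δ ∧ x = (p * b) ⊗ₜ[k] p' - p ⊗ₜ[k] (b * p')}

/-- The lifted canonical map `~can : P ⊗ P → P ⊗ C`, `p ⊗ p' ↦ p δ(p')`. -/
def canLift (δ : P →ₗ[k] P ⊗[k] C) : P ⊗[k] P →ₗ[k] P ⊗[k] C :=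
  (TensorProduct.map (LinearMap.mul' k P) LinearMap.id)
    ∘ₗ (TensorProduct.assoc k P P C).symm.toLinearMap
    ∘ₗ (lTensor P δ)

/-- The extension `P^{coC} ⊆ P` is coalgebra-Galois. -/
def IsCGalois (δ : P →ₗ[k] P ⊗[k] C) : Prop :=
  Function.Surjective (canLift δ) ∧ LinearMap.ker (canLift δ) = galRel δ

/-- A group-like element of the coalgebra `C`. -/
def IsGrouplike (e : C) : Prop :=
  (Coalgebra.comul : C →ₗ[k] C ⊗[k] C) e = e ⊗ₜ[k] e ∧
  (Coalgebra.counit : C →ₗ[k] k) e = 1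

/-- `p ⊗ (q ⊗ r) ↦ (pq) ⊗ r`. -/
def mulFst : P ⊗[k] (P ⊗[k] P) →ₗ[k] P ⊗[k] P :=
  (rTensor P (LinearMap.mul' k P)) ∘ₗ (TensorProduct.assoc k P P P).symm.toLinearMap


section Helpers

variable (δ : P →ₗ[k] P ⊗[k] C)

set_option linter.unusedSectionVars false

lemma canLift_tmul (u v : P) :
    canLift δ (u ⊗ₜ[k] v) = rTensor C (LinearMap.mulLeft k u) (δ v) := by
  unfold canLift
  simp only [coe_comp, Function.comp_apply, LinearEquiv.coe_coe, lTensor_tmul]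
  induction δ v using TensorProduct.induction_on with
  | zero => simp
  | tmul q c => simp [TensorProduct.assoc_symm_tmul, mul'_apply]
  | add x y hx hy => simp only [tmul_add, map_add, hx, hy]

lemma mulFst_tmul (u q r : P) :
    (mulFst (u ⊗ₜ[k] (q ⊗ₜ[k] r)) : P ⊗[k] P) = (u * q) ⊗ₜ[k] r := by
  simp [mulFst, TensorProduct.assoc_symm_tmul, mul'_apply]

lemma canLift_mulFst (u : P) (z : P ⊗[k] P) :
    canLift δ (mulFst (u ⊗ₜ[k] z)) = rTensor C (LinearMap.mulLeft k u) (canLift δ z) := by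
  induction z using TensorProduct.induction_on with
  | zero => simp
  | tmul q r =>
      rw [mulFst_tmul, canLift_tmul, canLift_tmul, mulLeft_mul, rTensor_comp]; rfl
  | add x y hx hy => simp only [tmul_add, map_add, hx, hy]

lemma mul'_eq (hδ : IsCoaction δ) (x : P ⊗[k] P) :
    LinearMap.mul' k P x
      = (TensorProduct.rid k P) ((lTensor P (Coalgebra.counit : C →ₗ[k] k)) (canLift δ x)) := by
  induction x using TensorProduct.induction_on with
  | zero => simp
  | tmul u v =>
      rw [mul'_apply, canLift_tmul]
      have key : ∀ y : P ⊗[k] C,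
          (TensorProduct.rid k P) ((lTensor P (Coalgebra.counit : C →ₗ[k] k))
            (rTensor C (LinearMap.mulLeft k u) y))
          = u * (TensorProduct.rid k P) ((lTensor P (Coalgebra.counit : C →ₗ[k] k)) y) := by
        intro y
        induction y using TensorProduct.induction_on with
        | zero => simp
        | tmul q c => simp [mul_smul_comm]
        | add a b ha hb => simp only [map_add, ha, hb, mul_add]
      rw [key, hδ.1]
  | add x y hx hy => simp only [map_add, hx, hy]

lemma canLift_mulFst_lTensor (t : C →ₗ[k] P ⊗[k] P)
    (ht : ∀ c : C, canLift δ (t c) = (1 : P) ⊗ₜ[k] c) (y : P ⊗[k] C) :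
    canLift δ (mulFst ((lTensor P t) y)) = y := by
  induction y using TensorProduct.induction_on with
  | zero => simp
  | tmul u c =>
      rw [lTensor_tmul, canLift_mulFst, ht]
      simp
  | add a b ha hb => simp only [map_add, ha, hb]

lemma canLift_coassoc (hδ : IsCoaction δ) (x : P ⊗[k] P) :
    rTensor C (canLift δ) ((TensorProduct.assoc k P P C).symm ((lTensor P δ) x))
      = (TensorProduct.assoc k P C C).symm
          ((lTensor P (Coalgebra.comul : C →ₗ[k] C ⊗[k] C)) (canLift δ x)) := by
  induction x using TensorProduct.induction_on with
  | zero => simp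
  | tmul u v =>
      have A : ∀ y : P ⊗[k] C,
          rTensor C (canLift δ) ((TensorProduct.assoc k P P C).symm (u ⊗ₜ[k] y))
            = rTensor C (rTensor C (LinearMap.mulLeft k u)) (rTensor C δ y) := by
        intro y
        induction y using TensorProduct.induction_on with
        | zero => simp
        | tmul q c => simp [TensorProduct.assoc_symm_tmul, canLift_tmul]
        | add a b ha hb => simp only [tmul_add, map_add, ha, hb]
      have B : ∀ y : P ⊗[k] C,
          (TensorProduct.assoc k P C C).symm
              ((lTensor P (Coalgebra.comul : C →ₗ[k] C ⊗[k] C))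
                (rTensor C (LinearMap.mulLeft k u) y))
            = rTensor C (rTensor C (LinearMap.mulLeft k u))
                ((TensorProduct.assoc k P C C).symm
                  ((lTensor P (Coalgebra.comul : C →ₗ[k] C ⊗[k] C)) y)) := by
        intro y
        induction y using TensorProduct.induction_on with
        | zero => simp
        | tmul q c =>
            simp only [rTensor_tmul, lTensor_tmul]
            induction (Coalgebra.comul : C →ₗ[k] C ⊗[k] C) c using
                TensorProduct.induction_on with
            | zero => simp
            | tmul c1 c2 => simp [TensorProduct.assoc_symm_tmul]
            | add a b ha hb => simp only [tmul_add, map_add, ha, hb]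
        | add a b ha hb => simp only [map_add, ha, hb]
      rw [lTensor_tmul, A, hδ.2, ← B, canLift_tmul]
  | add x y hx hy => simp only [map_add, hx, hy]

lemma smul_mulFst (b q : P) (z : P ⊗[k] P) :
    (mulFst ((b * q) ⊗ₜ[k] z) : P ⊗[k] P) = b • mulFst (q ⊗ₜ[k] z) := by
  induction z using TensorProduct.induction_on with
  | zero => simp
  | tmul z1 z2 =>
      rw [mulFst_tmul, mulFst_tmul, TensorProduct.smul_tmul', smul_eq_mul, mul_assoc]
  | add x y hx hy => simp only [tmul_add, map_add, hx, hy, smul_add]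

end Helpers

set_option maxHeartbeats 1000000 in
theorem translation_map_lemma
    (δ : P →ₗ[k] P ⊗[k] C) (hδ : IsCoaction δ) (hGal : IsCGalois δ)
    (t : C →ₗ[k] P ⊗[k] P) (ht : ∀ c : C, canLift δ (t c) = (1 : P) ⊗ₜ[k] c) :
    -- (i)  c^[1] (c^[2])₍₀₎ ⊗ (c^[2])₍₁₎ = 1 ⊗ c :
    (∀ c : C, canLift δ (t c) = (1 : P) ⊗ₜ[k] c) ∧
    -- (ii)  c^[1] c^[2] = ε(c) 1 :
    (∀ c : C, LinearMap.mul' k P (t c)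
        = ((Coalgebra.counit : C →ₗ[k] k) c) • (1 : P)) ∧
    -- (iii)  p₍₀₎ (p₍₁₎)^[1] ⊗_B (p₍₁₎)^[2] = 1 ⊗_B p :
    (∀ p : P, mulFst ((lTensor P t) (δ p)) - (1 : P) ⊗ₜ[k] p ∈ galRel δ) ∧
    -- (iv)  c^[1] ⊗_B (c^[2])₍₀₎ ⊗ (c^[2])₍₁₎ = (c₍₁₎)^[1] ⊗_B (c₍₁₎)^[2] ⊗ c₍₂₎ :
    (∀ c : C,
        (TensorProduct.assoc k P P C).symm ((lTensor P δ) (t c))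
          - (rTensor C t) ((Coalgebra.comul : C →ₗ[k] C ⊗[k] C) c)
        ∈ LinearMap.range (rTensor C (galRel δ).subtype)) ∧
    -- (v)  c^[1] ⊗_B 1 ⊗_B c^[2]
    --        = (c₍₁₎)^[1] ⊗_B (c₍₁₎)^[2] (c₍₂₎)^[1] ⊗_B (c₍₂₎)^[2] :
    (∀ c : C,
        (lTensor P ((TensorProduct.mk k P P) 1)) (t c)
          - (lTensor P mulFst)
              ((TensorProduct.assoc k P P (P ⊗[k] P))
                ((TensorProduct.map t t) ((Coalgebra.comul : C →ₗ[k] C ⊗[k] C) c)))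
        ∈ (Submodule.span k
             {x : P ⊗[k] (P ⊗[k] P) | ∃ (p b : P) (z : P ⊗[k] P),
               b ∈ coinv δ ∧ x = (p * b) ⊗ₜ[k] z - p ⊗ₜ[k] (b • z)}
           ⊔ LinearMap.range (lTensor P (galRel δ).subtype))) ∧
    -- (vi) gauge invariance: (F ⊗_B F) ∘ τ = τ for C-colinear algebra maps F :
    (∀ F : P →ₐ[k] P,
        (∀ p : P, δ (F p) = (rTensor C F.toLinearMap) (δ p)) →
        ∀ c : C,
          (TensorProduct.map F.toLinearMap F.toLinearMap) (t c) - t c ∈ galRel δ) ∧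
    -- (vii) in the e-coaugmented case, e^[1] ⊗_B e^[2] = 1 ⊗_B 1 :
    (∀ e : C, IsGrouplike (k := k) e → δ 1 = (1 : P) ⊗ₜ[k] e →
        t e - (1 : P) ⊗ₜ[k] (1 : P) ∈ galRel δ) := by

  classical
  -- exactness of  galRel → P⊗P → P⊗C
  have hker := hGal.2
  have hexact : Function.Exact ((galRel δ).subtype) (canLift δ) :=
    LinearMap.exact_iff.mpr (by rw [hker, Submodule.range_subtype])
  -- (ii)
  have h2 : ∀ c : C, LinearMap.mul' k P (t c)
      = ((Coalgebra.counit : C →ₗ[k] k) c) • (1 : P) := by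
    intro c
    rw [mul'_eq δ hδ, ht c]
    simp
  -- (iii)
  have h3 : ∀ p : P, mulFst ((lTensor P t) (δ p)) - (1 : P) ⊗ₜ[k] p ∈ galRel δ := by
    intro p
    rw [← hker, LinearMap.mem_ker, map_sub, canLift_mulFst_lTensor δ t ht, canLift_tmul,
      mulLeft_one, rTensor_id, LinearMap.id_apply, sub_self]
  -- (iv)
  have h4 : ∀ c : C,
      (TensorProduct.assoc k P P C).symm ((lTensor P δ) (t c))
        - (rTensor C t) ((Coalgebra.comul : C →ₗ[k] C ⊗[k] C) c)
      ∈ LinearMap.range (rTensor C (galRel δ).subtype) := by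
    intro c
    have hflat : Function.Exact (rTensor C (galRel δ).subtype) (rTensor C (canLift δ)) :=
      Module.Flat.rTensor_exact C hexact
    have haux : ∀ y : C ⊗[k] C,
        rTensor C (canLift δ) (rTensor C t y)
          = (TensorProduct.assoc k P C C).symm ((1 : P) ⊗ₜ[k] y) := by
      intro y
      induction y using TensorProduct.induction_on with
      | zero => simp
      | tmul c1 c2 => rw [rTensor_tmul, rTensor_tmul, ht, TensorProduct.assoc_symm_tmul]
      | add a b ha hb => simp only [tmul_add, map_add, ha, hb]
    have h0 : rTensor C (canLift δ) (
        (TensorProduct.assoc k P P C).symm ((lTensor P δ) (t c))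
          - (rTensor C t) ((Coalgebra.comul : C →ₗ[k] C ⊗[k] C) c)) = 0 := by
      rw [map_sub, canLift_coassoc δ hδ, ht, haux, lTensor_tmul, sub_self]
    obtain ⟨w, hw⟩ := (hflat _).mp h0
    exact ⟨w, hw⟩
  -- (v)
  have h5 : ∀ c : C,
      (lTensor P ((TensorProduct.mk k P P) 1)) (t c)
        - (lTensor P mulFst)
            ((TensorProduct.assoc k P P (P ⊗[k] P))
              ((TensorProduct.map t t) ((Coalgebra.comul : C →ₗ[k] C ⊗[k] C) c)))
      ∈ (Submodule.span k
           {x : P ⊗[k] (P ⊗[k] P) | ∃ (p b : P) (z : P ⊗[k] P),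
             b ∈ coinv δ ∧ x = (p * b) ⊗ₜ[k] z - p ⊗ₜ[k] (b • z)}
         ⊔ LinearMap.range (lTensor P (galRel δ).subtype)) := by
    intro c
    set N := (Submodule.span k
         {x : P ⊗[k] (P ⊗[k] P) | ∃ (p b : P) (z : P ⊗[k] P),
           b ∈ coinv δ ∧ x = (p * b) ⊗ₜ[k] z - p ⊗ₜ[k] (b • z)}
       ⊔ LinearMap.range (lTensor P (galRel δ).subtype)) with hN
    set f : P →ₗ[k] P ⊗[k] P := mulFst ∘ₗ (lTensor P t) ∘ₗ δ with hf
    have hfd : ∀ p : P, f p - (TensorProduct.mk k P P) 1 p ∈ galRel δ := by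
      intro p; simpa [hf] using h3 p
    set h : P →ₗ[k] (galRel δ) :=
      LinearMap.codRestrict (galRel δ) (f - (TensorProduct.mk k P P) 1)
        (by intro p; simpa using hfd p) with hh
    set G : (P ⊗[k] P) ⊗[k] C →ₗ[k] P ⊗[k] (P ⊗[k] P) :=
      (lTensor P mulFst) ∘ₗ (TensorProduct.assoc k P P (P ⊗[k] P)).toLinearMap
        ∘ₗ (lTensor (P ⊗[k] P) t) with hG
    -- G on the image of rTensor t (and on τ-side terms)
    have hG1 : G ((rTensor C t) ((Coalgebra.comul : C →ₗ[k] C ⊗[k] C) c))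
        = (lTensor P mulFst)
            ((TensorProduct.assoc k P P (P ⊗[k] P))
              ((TensorProduct.map t t) ((Coalgebra.comul : C →ₗ[k] C ⊗[k] C) c))) := by
      rw [hG]
      simp only [coe_comp, Function.comp_apply, LinearEquiv.coe_coe]
      rw [← LinearMap.comp_apply (lTensor (P ⊗[k] P) t) (rTensor C t),
        lTensor_comp_rTensor]
    have hG2 : ∀ x : P ⊗[k] P,
        G ((TensorProduct.assoc k P P C).symm ((lTensor P δ) x)) = lTensor P f x := by
      intro x
      induction x using TensorProduct.induction_on with
      | zero => simp
      | tmul u v =>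
          have inner : ∀ y : P ⊗[k] C,
              G ((TensorProduct.assoc k P P C).symm (u ⊗ₜ[k] y))
                = u ⊗ₜ[k] (mulFst ((lTensor P t) y)) := by
            intro y
            induction y using TensorProduct.induction_on with
            | zero => simp
            | tmul q c' =>
                rw [TensorProduct.assoc_symm_tmul, hG]
                simp [TensorProduct.assoc_tmul]
            | add a b ha hb => simp only [tmul_add, map_add, ha, hb]
          rw [lTensor_tmul, inner, lTensor_tmul, hf]
          rfl
      | add x y hx hy => simp only [map_add, hx, hy]
    -- G maps the (iv)-error module into N
    have hGN : ∀ w : (galRel δ) ⊗[k] C, G ((rTensor C (galRel δ).subtype) w) ∈ N := by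
      intro w
      induction w using TensorProduct.induction_on with
      | zero => simpa using N.zero_mem
      | tmul g c' =>
          rw [rTensor_tmul, Submodule.coe_subtype]
          set K : P ⊗[k] P →ₗ[k] P ⊗[k] (P ⊗[k] P) :=
            (lTensor P mulFst) ∘ₗ (TensorProduct.assoc k P P (P ⊗[k] P)).toLinearMap
              ∘ₗ ((TensorProduct.mk k (P ⊗[k] P) (P ⊗[k] P)).flip (t c')) with hK
          have hKg : ∀ x ∈ galRel δ, K x ∈ N := by
            intro x hx
            induction hx using Submodule.span_induction with
            | mem x hxs =>
                obtain ⟨p, b, p', hb, rfl⟩ := hxs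
                have : K ((p * b) ⊗ₜ[k] p' - p ⊗ₜ[k] (b * p'))
                    = (p * b) ⊗ₜ[k] (mulFst (p' ⊗ₜ[k] (t c')))
                      - p ⊗ₜ[k] (b • mulFst (p' ⊗ₜ[k] (t c'))) := by
                  rw [map_sub, hK]
                  simp only [coe_comp, Function.comp_apply, LinearEquiv.coe_coe,
                    flip_apply, TensorProduct.mk_apply, TensorProduct.assoc_tmul,
                    lTensor_tmul]
                  rw [smul_mulFst]
                rw [this, hN]
                exact Submodule.mem_sup_left (Submodule.subset_span
                  ⟨p, b, mulFst (p' ⊗ₜ[k] (t c')), hb, rfl⟩)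
            | zero => simpa using N.zero_mem
            | add x y hx hy ihx ihy => rw [map_add]; exact N.add_mem ihx ihy
            | smul a x hx ih => rw [map_smul]; exact N.smul_mem a ih
          have : G ((g : P ⊗[k] P) ⊗ₜ[k] c') = K (g : P ⊗[k] P) := by
            rw [hG, hK]
            simp only [coe_comp, Function.comp_apply, LinearEquiv.coe_coe,
              lTensor_tmul, flip_apply, TensorProduct.mk_apply]
          rw [this]
          exact hKg _ g.2
      | add a b ha hb => simp only [map_add]; exact N.add_mem ha hb
    -- assemble
    obtain ⟨w, hw⟩ := h4 c
    have hsub : lTensor P f (t c) - lTensor P ((TensorProduct.mk k P P) 1) (t c)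
        = lTensor P (galRel δ).subtype ((lTensor P h) (t c)) := by
      have hcomp : (galRel δ).subtype ∘ₗ h = f - (TensorProduct.mk k P P) 1 :=
        LinearMap.subtype_comp_codRestrict _ _ _
      calc lTensor P f (t c) - lTensor P ((TensorProduct.mk k P P) 1) (t c)
          = lTensor P (f - (TensorProduct.mk k P P) 1) (t c) := by
            rw [lTensor_sub, LinearMap.sub_apply]
        _ = lTensor P ((galRel δ).subtype ∘ₗ h) (t c) := by rw [hcomp]
        _ = lTensor P (galRel δ).subtype ((lTensor P h) (t c)) := by
            rw [lTensor_comp]; rfl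
    have hsplit :
        (lTensor P ((TensorProduct.mk k P P) 1)) (t c)
          - (lTensor P mulFst)
              ((TensorProduct.assoc k P P (P ⊗[k] P))
                ((TensorProduct.map t t) ((Coalgebra.comul : C →ₗ[k] C ⊗[k] C) c)))
        = -(lTensor P (galRel δ).subtype ((lTensor P h) (t c)))
            + G ((TensorProduct.assoc k P P C).symm ((lTensor P δ) (t c))
                  - (rTensor C t) ((Coalgebra.comul : C →ₗ[k] C ⊗[k] C) c)) := by
      rw [map_sub, hG1, hG2, ← hsub]
      abel
    rw [hsplit]
    refine N.add_mem (N.neg_mem ?_) ?_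
    · exact Submodule.mem_sup_right ⟨(lTensor P h) (t c), rfl⟩
    · rw [← hw]; exact hGN w
  -- (vi)
  have h6 : ∀ F : P →ₐ[k] P,
      (∀ p : P, δ (F p) = (rTensor C F.toLinearMap) (δ p)) →
      ∀ c : C,
        (TensorProduct.map F.toLinearMap F.toLinearMap) (t c) - t c ∈ galRel δ := by
    intro F hF c
    have key : ∀ x : P ⊗[k] P,
        canLift δ ((TensorProduct.map F.toLinearMap F.toLinearMap) x)
          = rTensor C F.toLinearMap (canLift δ x) := by
      intro x
      induction x using TensorProduct.induction_on with
      | zero => simp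
      | tmul u v =>
          have hcomm : (LinearMap.mulLeft k (F u)) ∘ₗ F.toLinearMap
              = F.toLinearMap ∘ₗ LinearMap.mulLeft k u := by
            ext p; simp [map_mul]
          rw [TensorProduct.map_tmul, canLift_tmul, canLift_tmul]
          simp only [AlgHom.toLinearMap_apply]
          rw [hF]
          have e1 : rTensor C (LinearMap.mulLeft k (F u))
                (rTensor C F.toLinearMap (δ v))
              = rTensor C ((LinearMap.mulLeft k (F u)) ∘ₗ F.toLinearMap) (δ v) := by
            rw [rTensor_comp]; rfl
          have e2 : rTensor C F.toLinearMap (rTensor C (LinearMap.mulLeft k u) (δ v))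
              = rTensor C (F.toLinearMap ∘ₗ LinearMap.mulLeft k u) (δ v) := by
            rw [rTensor_comp]; rfl
          rw [e1, e2, hcomm]
      | add x y hx hy => simp only [map_add, hx, hy]
    rw [← hker, LinearMap.mem_ker, map_sub, key, ht]
    simp
  -- (vii)
  have h7 : ∀ e : C, IsGrouplike (k := k) e → δ 1 = (1 : P) ⊗ₜ[k] e →
      t e - (1 : P) ⊗ₜ[k] (1 : P) ∈ galRel δ := by
    intro e _ hδ1
    rw [← hker, LinearMap.mem_ker, map_sub, ht, canLift_tmul, hδ1]
    simp
  exact ⟨ht, h2, h3, h4, h5, h6, h7⟩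


end CGal
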